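/- Let X be a proper, locally connected metric space and Ω ⊆ X a bounded domain. Then the completion clΩ_M of the metric space Ω_M = (Ω,dM) is compact if and only if Ω is finitely connected at the boundary. -/

import Mathlib

open Set MeasureTheory Filter ENNReal NNReal Metric Topology

noncomputable section

/-- Extended absolute value of the "difference" of two extended reals; with Mathlib's
`EReal` subtraction conventions, `erealAbs (a - b) = ∞` whenever both `a` and `b`
are infinite, matching the convention for the upper gradient inequality. -/
def erealAbs (a : EReal) : ℝ≥0∞ :=
  if a = ⊤ ∨ a = ⊥ then ⊤ else ENNReal.ofReal |a.toReal|

/-- Variation of `γ` over `[a,b]` computed with respect to an arbitrary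
distance-like function `ρ`, as a supremum over partitions
`a = t 0 ≤ t 1 ≤ ⋯ ≤ t n = b`. -/
def variationWith {Y : Type*} (ρ : Y → Y → ℝ≥0∞) (γ : ℝ → Y) (a b : ℝ) : ℝ≥0∞ :=
  ⨆ P ∈ {P : ℕ × (ℕ → ℝ) |
      Monotone P.2 ∧ (∀ i, P.2 i ∈ Set.Icc a b) ∧ P.2 0 = a ∧ P.2 P.1 = b},
    ∑ i ∈ Finset.range P.1, ρ (γ (P.2 i)) (γ (P.2 (i + 1)))

/-- `γ : [0,L] → Y` is parameterized by arc length with respect to `ρ`. -/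
def IsArcLengthParamWith {Y : Type*} (ρ : Y → Y → ℝ≥0∞) (γ : ℝ → Y) (L : ℝ) : Prop :=
  ∀ s t : ℝ, s ∈ Set.Icc 0 L → t ∈ Set.Icc 0 L → s ≤ t →
    variationWith ρ γ s t = ENNReal.ofReal (t - s)

/-- `g` is an upper gradient of `f` on `S` with respect to the distance `ρ`:
for every (nonconstant, compact, rectifiable) curve in `S` parameterized by
arc length, the upper gradient inequality holds. -/
def IsUpperGradientWith {Y : Type*} (ρ : Y → Y → ℝ≥0∞) (S : Set Y)
    (g : Y → ℝ≥0∞) (f : Y → EReal) : Prop :=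
  ∀ (γ : ℝ → Y) (L : ℝ), 0 < L → Set.MapsTo γ (Set.Icc 0 L) S →
    IsArcLengthParamWith ρ γ L →
    erealAbs (f (γ L) - f (γ 0)) ≤ ∫⁻ t in Set.Icc 0 L, g (γ t)

/-- Upper gradient on `S` with respect to the ambient metric. -/
def IsUpperGradientOn {Y : Type*} [PseudoEMetricSpace Y] (S : Set Y)
    (g : Y → ℝ≥0∞) (f : Y → EReal) : Prop :=
  IsUpperGradientWith (fun x y => edist x y) S g f

/-- The `p`-th power of the Newtonian norm of `f` on `S` with respect to the
measure `m` and the distance `ρ`: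
`∫_S |f|^p dm + inf {∫_S g^p dm : g a Borel upper gradient of f on S w.r.t. ρ}`. -/
def npEnergyWith {Y : Type*} [MeasurableSpace Y] (m : Measure Y) (p : ℝ)
    (ρ : Y → Y → ℝ≥0∞) (S : Set Y) (f : Y → ℝ) : ℝ≥0∞ :=
  (∫⁻ y in S, ENNReal.ofReal |f y| ^ p ∂m) +
    ⨅ g ∈ {g : Y → ℝ≥0∞ | Measurable g ∧
        IsUpperGradientWith ρ S g (fun y => (f y : EReal))},
      ∫⁻ y in S, g y ^ p ∂m

/-- The `p`-th power of the Newtonian norm of `f` on `S ⊆ Y` (w.r.t. the ambient metric). -/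
def npEnergyOn {Y : Type*} [PseudoEMetricSpace Y] [MeasurableSpace Y]
    (m : Measure Y) (p : ℝ) (S : Set Y) (f : Y → ℝ) : ℝ≥0∞ :=
  npEnergyWith m p (fun x y => edist x y) S f

/-- `f ∈ N^{1,p}(S, m)`. -/
def MemNp {Y : Type*} [PseudoEMetricSpace Y] [MeasurableSpace Y]
    (m : Measure Y) (p : ℝ) (S : Set Y) (f : Y → ℝ) : Prop :=
  Measurable f ∧ npEnergyOn m p S f ≠ ⊤

/-- The Sobolev capacity `C_p(E; S)` of `E ⊆ S`. -/
def CpOn {Y : Type*} [PseudoEMetricSpace Y] [MeasurableSpace Y]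
    (m : Measure Y) (p : ℝ) (S E : Set Y) : ℝ≥0∞ :=
  ⨅ u ∈ {u : Y → ℝ | MemNp m p S u ∧ ∀ x ∈ E, u x = 1}, npEnergyOn m p S u

/-- The capacity `bC_p(E; S)` of `E ⊆ closure S`. -/
def bCpOn {Y : Type*} [PseudoEMetricSpace Y] [MeasurableSpace Y]
    (m : Measure Y) (p : ℝ) (S E : Set Y) : ℝ≥0∞ :=
  ⨅ u ∈ {u : Y → ℝ | MemNp m p S u ∧ (∀ x ∈ E ∩ S, 1 ≤ u x) ∧
      ∀ x ∈ E ∩ (closure S \ S),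
        (1 : EReal) ≤ Filter.liminf (fun y => (u y : EReal)) (nhdsWithin x S)},
    npEnergyOn m p S u

/-- The Mazurkiewicz distance on `S`. -/
def mazDist {Y : Type*} [PseudoEMetricSpace Y] (S : Set Y) (x y : Y) : ℝ≥0∞ :=
  ⨅ E ∈ {E : Set Y | E ⊆ S ∧ IsConnected E ∧ x ∈ E ∧ y ∈ E}, EMetric.diam E

/-- The inner metric on `S`: the infimum of lengths of curves in `S` joining
`x` and `y` (`∞` if there are none). -/
def innerDist {Y : Type*} [PseudoEMetricSpace Y] (S : Set Y) (x y : Y) : ℝ≥0∞ :=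
  ⨅ c ∈ {c : (ℝ → Y) × ℝ × ℝ | c.2.1 ≤ c.2.2 ∧
      ContinuousOn c.1 (Set.Icc c.2.1 c.2.2) ∧
      Set.MapsTo c.1 (Set.Icc c.2.1 c.2.2) S ∧ c.1 c.2.1 = x ∧ c.1 c.2.2 = y},
    eVariationOn c.1 (Set.Icc c.2.1 c.2.2)

/-- `S` is `L`-quasiconvex: any two points of `S` can be joined by a curve in `S`
of length at most `L` times their distance. -/
def LQuasiconvexOn {Y : Type*} [PseudoMetricSpace Y] (S : Set Y) (L : ℝ) : Prop :=
  ∀ x ∈ S, ∀ y ∈ S, ∃ (γ : ℝ → Y) (a b : ℝ), a ≤ b ∧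
    ContinuousOn γ (Set.Icc a b) ∧ Set.MapsTo γ (Set.Icc a b) S ∧
    γ a = x ∧ γ b = y ∧ eVariationOn γ (Set.Icc a b) ≤ ENNReal.ofReal (L * dist x y)

/-- A quasiconvex metric space. -/
def QuasiconvexSpace (Y : Type*) [PseudoMetricSpace Y] : Prop :=
  ∃ L : ℝ, 1 ≤ L ∧ LQuasiconvexOn (Set.univ : Set Y) L

/-- A bounded domain: a bounded nonempty open connected set. -/
def IsBoundedDomain {Y : Type*} [PseudoMetricSpace Y] (Ω : Set Y) : Prop :=
  IsOpen Ω ∧ IsConnected Ω ∧ Bornology.IsBounded Ω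

/-- `Ω` is finitely connected at the boundary. -/
def FinConnAtBoundary {Y : Type*} [MetricSpace Y] (Ω : Set Y) : Prop :=
  ∀ x₀ ∈ frontier Ω, ∀ r : ℝ, 0 < r → ∃ G : Set Y, IsOpen G ∧ x₀ ∈ G ∧
    G ⊆ Metric.ball x₀ r ∧
    {C : Set Y | ∃ x ∈ G ∩ Ω, C = connectedComponentIn (G ∩ Ω) x}.Finite

/-- The standing assumption on the measure: every ball has positive finite measure. -/
def BallRegular {Y : Type*} [PseudoMetricSpace Y] [MeasurableSpace Y]
    (m : Measure Y) : Prop :=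
  ∀ (x : Y) (r : ℝ), 0 < r → 0 < m (Metric.ball x r) ∧ m (Metric.ball x r) < ⊤

/-- The measure `m` is (globally) doubling. -/
def DoublingMeasure' {Y : Type*} [PseudoMetricSpace Y] [MeasurableSpace Y]
    (m : Measure Y) : Prop :=
  ∃ C : ℝ≥0, 0 < C ∧ ∀ (x : Y) (r : ℝ), 0 < r →
    m (Metric.ball x (2 * r)) ≤ C * m (Metric.ball x r)

/-- `(Y, m)` supports a `p`-Poincaré inequality. -/
def PoincareInequality {Y : Type*} [MetricSpace Y] [MeasurableSpace Y]
    (m : Measure Y) (p : ℝ) : Prop :=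
  ∃ C lam : ℝ, 0 < C ∧ 1 ≤ lam ∧
    ∀ (x : Y) (r : ℝ), 0 < r → ∀ f : Y → ℝ, Integrable f m →
      ∀ g : Y → ℝ≥0∞, Measurable g →
        IsUpperGradientOn (Set.univ : Set Y) g (fun y => (f y : EReal)) →
        ENNReal.ofReal (⨍ y in Metric.ball x r,
            |f y - ⨍ z in Metric.ball x r, f z ∂m| ∂m) ≤
          ENNReal.ofReal (C * Metric.diam (Metric.ball x r)) *
            ((∫⁻ y in Metric.ball x (lam * r), g y ^ p ∂m) /
              m (Metric.ball x (lam * r))) ^ (1 / p)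

/-!
Since `Ω_M` sits isometrically and densely in the complete space `clΩ_M`, the completion is
compact exactly when `Ω` is totally bounded for `dM`.

If `Ω` is finitely connected at the boundary, cover the compact set `∂Ω` by finitely many open
`G` such that `G ∩ Ω` has finitely many components, all of small diameter; what is left of the
closure of `Ω` is a compact subset of `Ω`, which local connectedness covers by finitely many small
connected open sets. A point in each of these finitely many connected pieces gives a finite
`dM`-net. Conversely, given a finite `dM`-net `s` of mesh `r / 2`, every point of
`Ω ∩ B(x₀, r / 2)` lies in the component of `B(x₀, r) ∩ Ω` of some point of `s`, so `G` can be
taken to be `B(x₀, r / 2)` together with these finitely many open components.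
-/

section Mazurkiewicz

variable {X : Type*}

lemma mazDist_le_ediam [PseudoEMetricSpace X] {Ω E : Set X} {x y : X} (hEΩ : E ⊆ Ω)
    (hE : IsConnected E) (hx : x ∈ E) (hy : y ∈ E) : mazDist Ω x y ≤ ediam E :=
  iInf₂_le E ⟨hEΩ, hE, hx, hy⟩

lemma edist_le_mazDist [PseudoEMetricSpace X] (Ω : Set X) (x y : X) :
    edist x y ≤ mazDist Ω x y :=
  le_iInf₂ fun _ hE => edist_le_ediam_of_mem hE.2.2.1 hE.2.2.2

lemma exists_isConnected_ediam_lt_of_mazDist_lt [PseudoEMetricSpace X] {Ω : Set X} {x y : X}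
    {ε : ℝ≥0∞} (h : mazDist Ω x y < ε) :
    ∃ E ⊆ Ω, IsConnected E ∧ x ∈ E ∧ y ∈ E ∧ ediam E < ε := by
  simp only [mazDist, iInf_lt_iff, exists_prop] at h
  obtain ⟨E, ⟨hEΩ, hE, hx, hy⟩, hlt⟩ := h
  exact ⟨E, hEΩ, hE, hx, hy, hlt⟩

def MazTotallyBounded [PseudoEMetricSpace X] (Ω : Set X) : Prop :=
  ∀ ε : ℝ, 0 < ε → ∃ s ⊆ Ω, s.Finite ∧ ∀ x ∈ Ω, ∃ y ∈ s, mazDist Ω x y < ENNReal.ofReal ε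

lemma totallyBounded_range_iff_mazTotallyBounded [MetricSpace X] {Ω : Set X}
    {Z : Type*} [MetricSpace Z] {ι : Ω → Z}
    (hι : ∀ x y : Ω, edist (ι x) (ι y) = mazDist Ω (x : X) (y : X)) :
    TotallyBounded (range ι) ↔ MazTotallyBounded Ω := by
  have hinj : ι.Injective := fun x y hxy => Subtype.ext <| edist_eq_zero.mp <|
    le_antisymm ((edist_le_mazDist Ω x y).trans_eq (by rw [← hι, hxy, edist_self])) zero_le
  constructor
  · intro htb ε hε
    obtain ⟨t, htι, ht, hcov⟩ := finite_approx_of_totallyBounded htb ε hε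
    refine ⟨Subtype.val '' (ι ⁻¹' t), Subtype.coe_image_subset Ω _,
      (ht.preimage hinj.injOn).image _, fun x hx => ?_⟩
    obtain ⟨_, hwt, hxw⟩ := mem_iUnion₂.mp (hcov (mem_range_self ⟨x, hx⟩))
    obtain ⟨w, rfl⟩ := htι hwt
    exact ⟨w, mem_image_of_mem _ hwt, by rw [← hι ⟨x, hx⟩ w]; exact edist_lt_ofReal.mpr hxw⟩
  · intro htb
    refine totallyBounded_iff.mpr fun ε hε => ?_
    obtain ⟨s, hsΩ, hs, hnet⟩ := htb ε hε
    refine ⟨ι '' (Subtype.val ⁻¹' s), (hs.preimage Subtype.val_injective.injOn).image ι, ?_⟩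
    rintro _ ⟨x, rfl⟩
    obtain ⟨y, hys, hxy⟩ := hnet x x.2
    exact mem_iUnion₂.mpr ⟨ι ⟨y, hsΩ hys⟩, mem_image_of_mem ι hys,
      edist_lt_ofReal.mp (by rw [hι]; exact hxy)⟩

end Mazurkiewicz

lemma compactSpace_iff_totallyBounded_range {α Z : Type*} [UniformSpace Z] [CompleteSpace Z]
    {f : α → Z} (hf : DenseRange f) : CompactSpace Z ↔ TotallyBounded (range f) := by
  refine ⟨fun _ => isCompact_univ.totallyBounded.subset (subset_univ _), fun h => ?_⟩
  rw [← isCompact_univ_iff, isCompact_iff_totallyBounded_isComplete]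
  refine ⟨?_, isComplete_univ⟩
  rw [← hf.closure_range]
  exact h.closure

section Components

variable {α : Type*} [TopologicalSpace α]

lemma connectedComponentIn_eq_of_connectedComponentIn_subset {D W : Set α} {x : α}
    (hWD : W ⊆ D) (hx : connectedComponentIn D x ⊆ W) :
    connectedComponentIn W x = connectedComponentIn D x := by
  refine (connectedComponentIn_mono x hWD).antisymm ?_
  by_cases hxD : x ∈ D
  · exact isPreconnected_connectedComponentIn.subset_connectedComponentIn
      (mem_connectedComponentIn hxD) hx
  · simp [connectedComponentIn_eq_empty hxD]

lemma finite_connectedComponentIn_biUnion_connectedComponentIn {D s : Set α} (hs : s.Finite) :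
    {C | ∃ x ∈ ⋃ i ∈ s, connectedComponentIn D i,
      C = connectedComponentIn (⋃ i ∈ s, connectedComponentIn D i) x}.Finite := by
  refine (hs.image (connectedComponentIn D)).subset ?_
  rintro _ ⟨x, hx, rfl⟩
  obtain ⟨i, hi, hxi⟩ := mem_iUnion₂.mp hx
  have hix : connectedComponentIn D i = connectedComponentIn D x := connectedComponentIn_eq hxi
  refine ⟨i, hi, ?_⟩
  rw [connectedComponentIn_eq_of_connectedComponentIn_subset
    (iUnion₂_subset fun j _ => connectedComponentIn_subset D j)
    (hix ▸ subset_iUnion₂ (s := fun j _ => connectedComponentIn D j) i hi), hix]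

end Components

section FiniteConnectedCover

variable {X : Type*} [PseudoMetricSpace X]

structure IsFiniteConnectedCover (U S : Set X) (r : ℝ) (𝒞 : Set (Set X)) : Prop where
  finite : 𝒞.Finite
  subset_sUnion : S ⊆ ⋃₀ 𝒞
  subset_of_mem : ∀ C ∈ 𝒞, C ⊆ U
  isConnected_of_mem : ∀ C ∈ 𝒞, IsConnected C
  exists_subset_ball : ∀ C ∈ 𝒞, ∃ x, C ⊆ ball x r

variable {U S T : Set X} {r : ℝ} {𝒞 𝒞' : Set (Set X)}

lemma IsFiniteConnectedCover.mono (h : IsFiniteConnectedCover U S r 𝒞) (hTS : T ⊆ S) :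
    IsFiniteConnectedCover U T r 𝒞 :=
  { h with subset_sUnion := hTS.trans h.subset_sUnion }

lemma IsFiniteConnectedCover.union (h : IsFiniteConnectedCover U S r 𝒞)
    (h' : IsFiniteConnectedCover U T r 𝒞') : IsFiniteConnectedCover U (S ∪ T) r (𝒞 ∪ 𝒞') where
  finite := h.finite.union h'.finite
  subset_sUnion := sUnion_union 𝒞 𝒞' ▸ union_subset_union h.subset_sUnion h'.subset_sUnion
  subset_of_mem C hC := hC.elim (h.subset_of_mem C) (h'.subset_of_mem C)
  isConnected_of_mem C hC := hC.elim (h.isConnected_of_mem C) (h'.isConnected_of_mem C)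
  exists_subset_ball C hC := hC.elim (h.exists_subset_ball C) (h'.exists_subset_ball C)

lemma IsFiniteConnectedCover.biUnion {ι : Type*} {I : Set ι} (hI : I.Finite) {S : ι → Set X}
    {𝒞 : ι → Set (Set X)} (h : ∀ i ∈ I, IsFiniteConnectedCover U (S i) r (𝒞 i)) :
    IsFiniteConnectedCover U (⋃ i ∈ I, S i) r (⋃ i ∈ I, 𝒞 i) where
  finite := hI.biUnion fun i hi => (h i hi).finite
  subset_sUnion := iUnion₂_subset fun i hi => (h i hi).subset_sUnion.trans
    (sUnion_mono (subset_iUnion₂ (s := fun i _ => 𝒞 i) i hi))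
  subset_of_mem C hC := by
    obtain ⟨i, hi, hC⟩ := mem_iUnion₂.mp hC
    exact (h i hi).subset_of_mem C hC
  isConnected_of_mem C hC := by
    obtain ⟨i, hi, hC⟩ := mem_iUnion₂.mp hC
    exact (h i hi).isConnected_of_mem C hC
  exists_subset_ball C hC := by
    obtain ⟨i, hi, hC⟩ := mem_iUnion₂.mp hC
    exact (h i hi).exists_subset_ball C hC

lemma isFiniteConnectedCover_connectedComponentIn {G Ω : Set X} {x₀ : X}
    (hG : G ⊆ ball x₀ r)
    (hfin : {C | ∃ x ∈ G ∩ Ω, C = connectedComponentIn (G ∩ Ω) x}.Finite) :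
    IsFiniteConnectedCover Ω (G ∩ Ω) r {C | ∃ x ∈ G ∩ Ω, C = connectedComponentIn (G ∩ Ω) x} where
  finite := hfin
  subset_sUnion x hx := mem_sUnion.mpr ⟨_, ⟨x, hx, rfl⟩, mem_connectedComponentIn hx⟩
  subset_of_mem := by
    rintro _ ⟨x, -, rfl⟩
    exact (connectedComponentIn_subset _ _).trans inter_subset_right
  isConnected_of_mem := by
    rintro _ ⟨x, hx, rfl⟩
    exact isConnected_connectedComponentIn_iff.mpr hx
  exists_subset_ball := by
    rintro _ ⟨x, -, rfl⟩
    exact ⟨x₀, (connectedComponentIn_subset _ _).trans (inter_subset_left.trans hG)⟩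

lemma IsCompact.exists_isFiniteConnectedCover [LocallyConnectedSpace X] {K : Set X}
    (hK : IsCompact K) (hU : IsOpen U) (hKU : K ⊆ U) (hr : 0 < r) :
    ∃ 𝒞, IsFiniteConnectedCover U K r 𝒞 := by
  have hV : ∀ x ∈ K, ∃ V ⊆ U ∩ ball x r, IsOpen V ∧ x ∈ V ∧ IsConnected V := fun x hx =>
    locallyConnectedSpace_iff_subsets_isOpen_isConnected.mp ‹_› x _
      ((hU.inter isOpen_ball).mem_nhds ⟨hKU hx, mem_ball_self hr⟩)
  choose! V hVsub hVo hxV hVc using hV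
  obtain ⟨t, htK, hKt⟩ := hK.elim_nhds_subcover V fun x hx => (hVo x hx).mem_nhds (hxV x hx)
  refine ⟨V '' t, t.finite_toSet.image V, by rwa [sUnion_image], ?_, ?_, ?_⟩ <;>
    rintro _ ⟨x, hx, rfl⟩
  · exact (hVsub x (htK x hx)).trans inter_subset_left
  · exact hVc x (htK x hx)
  · exact ⟨x, (hVsub x (htK x hx)).trans inter_subset_right⟩

lemma mazTotallyBounded_of_forall_isFiniteConnectedCover {Ω : Set X}
    (h : ∀ r : ℝ, 0 < r → ∃ 𝒞, IsFiniteConnectedCover Ω Ω r 𝒞) : MazTotallyBounded Ω := by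
  intro ε hε
  obtain ⟨𝒞, h𝒞⟩ := h (ε / 4) (by positivity)
  have := h𝒞.finite.to_subtype
  choose p hp using fun C : 𝒞 => (h𝒞.isConnected_of_mem C C.2).nonempty
  refine ⟨range p, ?_, finite_range p, fun x hx => ?_⟩
  · rintro _ ⟨C, rfl⟩
    exact h𝒞.subset_of_mem C C.2 (hp C)
  obtain ⟨C, hC, hxC⟩ := mem_sUnion.mp (h𝒞.subset_sUnion hx)
  obtain ⟨c, hCc⟩ := h𝒞.exists_subset_ball C hC
  have hdiam : ediam C ≤ ENNReal.ofReal (ε / 2) := ediam_le_of_forall_dist_le fun y hy z hz =>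
    (dist_triangle_right y z c).trans (by linarith [mem_ball.mp (hCc hy), mem_ball.mp (hCc hz)])
  refine ⟨p ⟨C, hC⟩, mem_range_self _, ?_⟩
  calc mazDist Ω x (p ⟨C, hC⟩) ≤ ediam C :=
        mazDist_le_ediam (h𝒞.subset_of_mem C hC) (h𝒞.isConnected_of_mem C hC) hxC (hp ⟨C, hC⟩)
    _ ≤ ENNReal.ofReal (ε / 2) := hdiam
    _ < ENNReal.ofReal ε := (ENNReal.ofReal_lt_ofReal_iff hε).mpr (by linarith)

end FiniteConnectedCover

lemma exists_isFiniteConnectedCover_of_finConnAtBoundary {X : Type*} [MetricSpace X]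
    {Ω : Set X} {r : ℝ} (hΩ : IsCompact (frontier Ω)) (hfc : FinConnAtBoundary Ω) (hr : 0 < r) :
    ∃ U, IsOpen U ∧ frontier Ω ⊆ U ∧ ∃ 𝒞, IsFiniteConnectedCover Ω (U ∩ Ω) r 𝒞 := by
  choose G hGo hxG hGr hGfin using fun x : frontier Ω => hfc x x.2 r hr
  obtain ⟨I, hI⟩ := hΩ.elim_finite_subcover G hGo fun x hx => mem_iUnion.mpr ⟨⟨x, hx⟩, hxG _⟩
  refine ⟨⋃ i ∈ I, G i, isOpen_biUnion fun i _ => hGo i, hI, ?_⟩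
  rw [iUnion₂_inter]
  exact ⟨_, IsFiniteConnectedCover.biUnion I.finite_toSet fun i _ =>
    isFiniteConnectedCover_connectedComponentIn (hGr i) (hGfin i)⟩

theorem mazTotallyBounded_of_finConnAtBoundary {X : Type*} [MetricSpace X] [ProperSpace X]
    [LocallyConnectedSpace X] {Ω : Set X} (hΩ : IsOpen Ω) (hbdd : Bornology.IsBounded Ω)
    (hfc : FinConnAtBoundary Ω) : MazTotallyBounded Ω := by
  refine mazTotallyBounded_of_forall_isFiniteConnectedCover fun r hr => ?_
  have hcl : IsCompact (closure Ω) := hbdd.isCompact_closure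
  obtain ⟨U, hUo, hU, 𝒞, h𝒞⟩ := exists_isFiniteConnectedCover_of_finConnAtBoundary
    (hcl.of_isClosed_subset isClosed_frontier frontier_subset_closure) hfc hr
  have hKΩ : closure Ω \ U ⊆ Ω := fun x hx => by_contra fun hxΩ =>
    hx.2 (hU (hΩ.frontier_eq ▸ ⟨hx.1, hxΩ⟩))
  obtain ⟨𝒞', h𝒞'⟩ := (hcl.diff hUo).exists_isFiniteConnectedCover hΩ hKΩ hr
  exact ⟨𝒞 ∪ 𝒞', (h𝒞.union h𝒞').mono fun x hx =>
    (em (x ∈ U)).imp (fun hxU => ⟨hxU, hx⟩) fun hxU => ⟨subset_closure hx, hxU⟩⟩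

lemma connectedComponentIn_ball_inter_eq_of_mazDist_lt {X : Type*} [PseudoMetricSpace X]
    {Ω : Set X} {x₀ y z : X} {r δ R : ℝ} (hy : y ∈ ball x₀ r)
    (hyz : mazDist Ω y z < ENNReal.ofReal δ) (hR : r + δ ≤ R) :
    connectedComponentIn (ball x₀ R ∩ Ω) y = connectedComponentIn (ball x₀ R ∩ Ω) z := by
  obtain ⟨E, hEΩ, hE, hyE, hzE, hEδ⟩ := exists_isConnected_ediam_lt_of_mazDist_lt hyz
  have hER : E ⊆ ball x₀ R ∩ Ω := fun w hw => by
    have hwy : dist w y < δ := edist_lt_ofReal.mp ((edist_le_ediam_of_mem hw hyE).trans_lt hEδ)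
    exact ⟨mem_ball.mpr (by linarith [dist_triangle w y x₀, mem_ball.mp hy]), hEΩ hw⟩
  exact connectedComponentIn_eq (hE.isPreconnected.subset_connectedComponentIn hyE hER hzE)

theorem finConnAtBoundary_of_mazTotallyBounded {X : Type*} [MetricSpace X]
    [LocallyConnectedSpace X] {Ω : Set X} (hΩ : IsOpen Ω) (htb : MazTotallyBounded Ω) :
    FinConnAtBoundary Ω := by
  intro x₀ _ r hr
  obtain ⟨s, -, hs, hnet⟩ := htb (r / 2) (half_pos hr)
  set W := ⋃ i ∈ s, connectedComponentIn (ball x₀ r ∩ Ω) i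
  have hW : W ⊆ ball x₀ r ∩ Ω := iUnion₂_subset fun i _ => connectedComponentIn_subset _ i
  have hBW : ball x₀ (r / 2) ∩ Ω ⊆ W := by
    rintro y ⟨hy, hyΩ⟩
    obtain ⟨i, his, hyi⟩ := hnet y hyΩ
    refine mem_iUnion₂.mpr ⟨i, his, ?_⟩
    rw [← connectedComponentIn_ball_inter_eq_of_mazDist_lt hy hyi (by linarith)]
    exact mem_connectedComponentIn ⟨ball_subset_ball (by linarith) hy, hyΩ⟩
  have hGΩ : (ball x₀ (r / 2) ∪ W) ∩ Ω = W := by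
    rw [union_inter_distrib_right, inter_eq_left.mpr (hW.trans inter_subset_right),
      union_eq_right.mpr hBW]
  refine ⟨ball x₀ (r / 2) ∪ W,
    isOpen_ball.union (isOpen_biUnion fun i _ => (isOpen_ball.inter hΩ).connectedComponentIn),
    Or.inl (mem_ball_self (half_pos hr)),
    union_subset (ball_subset_ball (by linarith)) (hW.trans inter_subset_left), ?_⟩
  rw [hGΩ]
  exact finite_connectedComponentIn_biUnion_connectedComponentIn hs

theorem statement4 {X : Type*} [MetricSpace X] [ProperSpace X]
    [LocallyConnectedSpace X] (Ω : Set X) (hΩ : IsBoundedDomain Ω)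
    (Z : Type*) [MetricSpace Z] [CompleteSpace Z] (ι : Ω → Z)
    (hι : ∀ x y : Ω, edist (ι x) (ι y) = mazDist Ω (x : X) (y : X))
    (hdense : DenseRange ι) :
    CompactSpace Z ↔ FinConnAtBoundary Ω := by
  obtain ⟨hΩo, -, hΩb⟩ := hΩ
  rw [compactSpace_iff_totallyBounded_range hdense, totallyBounded_range_iff_mazTotallyBounded hι]
  exact ⟨finConnAtBoundary_of_mazTotallyBounded hΩo,
    mazTotallyBounded_of_finConnAtBoundary hΩo hΩb⟩
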